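/- arXiv:2003.07395 — 6 statements merged into one kernel-verified Lean document; each statement's English description precedes it below -/
import Mathlib

section
/- pullUpLeft preserves the Braun property and decrements the size: if t is a nonempty Braun tree over a linear order α and (t', x) = pullUpLeft t, then t' is a Braun tree and size t' = size t − 1. -/
inductive BTree (α : Type*) where
  | nil : BTree α
  | node : α → BTree α → BTree α → BTree α

namespace BTree

variable {α : Type*}

def size : BTree α → ℕ
  | .nil => 0
  | .node _ l r => size l + size r + 1

def toMultiset : BTree α → Multiset α
  | .nil => 0
  | .node v l r => v ::ₘ (toMultiset l + toMultiset r)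

def IsBraun : BTree α → Prop
  | .nil => True
  | .node _ l r => size r ≤ size l ∧ size l ≤ size r + 1 ∧ IsBraun l ∧ IsBraun r

def IsHeap [LinearOrder α] : BTree α → Prop
  | .nil => True
  | .node v l r =>
      (∀ y ∈ toMultiset l, v ≤ y) ∧ (∀ y ∈ toMultiset r, v ≤ y) ∧ IsHeap l ∧ IsHeap r

/-- Extract the bottom-left element, swapping subtrees on the way down.
Defined on nonempty trees (`none` on `nil`). -/
def pullUpLeft : BTree α → Option (BTree α × α)
  | .nil => none
  | .node v .nil _ => some (.nil, v)
  | .node v (.node w a b) r =>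
      match pullUpLeft (.node w a b) with
      | some (l', x) => some (.node v r l', x)
      | none => none

/-- Push the root value down to restore the heap property. -/
def pushDown [LinearOrder α] : BTree α → BTree α
  | .nil => .nil
  | .node v .nil .nil => .node v .nil .nil
  | .node v (.node w a b) .nil =>
      if w < v then .node w (.node v a b) .nil else .node v (.node w a b) .nil
  | .node v .nil (.node w a b) => .node v .nil (.node w a b)
  | .node v (.node wl al bl) (.node wr ar br) =>
      if v ≤ wl ∧ v ≤ wr then .node v (.node wl al bl) (.node wr ar br)
      else if wl ≤ wr then .node wl (pushDown (.node v al bl)) (.node wr ar br)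
      else .node wr (.node wl al bl) (pushDown (.node v ar br))
termination_by t => size t
decreasing_by all_goals (simp [size] <;> omega)

/-- Remove the minimum from a nonempty Braun heap. -/
def removeMin [LinearOrder α] : BTree α → Option (BTree α × α)
  | .nil => none
  | .node v l r =>
      match pullUpLeft (.node v l r) with
      | none => none
      | some (.nil, _) => some (.nil, v)
      | some (.node _ l' r', x) => some (pushDown (.node x l' r'), v)

def height : BTree α → ℕ
  | .nil => 0
  | .node _ l r => 1 + max (height l) (height r)

def map {β : Type*} (f : α → β) : BTree α → BTree β
  | .nil => .nil
  | .node v l r => .node (f v) (map f l) (map f r)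

def left : BTree α → BTree α
  | .nil => .nil
  | .node _ l _ => l

def right : BTree α → BTree α
  | .nil => .nil
  | .node _ _ r => r

end BTree

open BTree

theorem pullUpLeft_isBraun_size {α : Type*} [LinearOrder α] (t t' : BTree α) (x : α)
    (hne : t ≠ BTree.nil) (ht : t.IsBraun)
    (h : pullUpLeft t = some (t', x)) :
    t'.IsBraun ∧ t'.size = t.size - 1 := by
  induction t generalizing t' x with
  | nil => simp at hne
  | node v l r ihl ihr =>
    match l with
    | .nil =>
      simp [pullUpLeft] at h
      obtain ⟨h1, h2⟩ := h
      subst h1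
      obtain ⟨hr1, hr2, _, _⟩ := ht
      simp [size] at hr1 ⊢
      cases r with
      | nil => simp [IsBraun, size]
      | node _ _ _ => simp [size] at hr1
    | .node w a b =>
      simp only [pullUpLeft] at h
      cases hp : pullUpLeft (BTree.node w a b) with
      | none => rw [hp] at h; simp at h
      | some p =>
        obtain ⟨l', y⟩ := p
        rw [hp] at h
        simp at h
        obtain ⟨h1, h2⟩ := h
        subst h2
        obtain ⟨ht1, ht2, htl, htr⟩ := ht
        obtain ⟨hb, hs⟩ := ihl l' y (by simp) htl hp
        subst h1
        refine ⟨⟨?_, ?_, htr, hb⟩, ?_⟩ <;> simp [size] at * <;> omega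
end

section
/- pullUpLeft preserves the heap property: if t is a nonempty Braun tree over a linear order α satisfying the heap property and (t', x) = pullUpLeft t, then t' satisfies the heap property. -/
open BTree

theorem pullUpLeft_mem {α : Type*} : ∀ (t t' : BTree α) (x : α),
    pullUpLeft t = some (t', x) → ∀ y ∈ t'.toMultiset, y ∈ t.toMultiset := by
  intro t
  induction t with
  | nil => intro t' x h; simp [pullUpLeft] at h
  | node v l r ihl ihr =>
    intro t' x h y hy
    cases l with
    | nil =>
      simp [pullUpLeft] at h
      rw [← h.1] at hy
      simp [toMultiset] at hy
    | node w a b =>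
      simp only [pullUpLeft] at h
      cases hp : pullUpLeft (BTree.node w a b) with
      | none => rw [hp] at h; simp at h
      | some p =>
        rw [hp] at h
        obtain ⟨l', x'⟩ := p
        simp at h
        obtain ⟨ht', hx⟩ := h
        rw [← ht'] at hy
        simp [toMultiset] at hy ⊢
        rcases hy with h1 | h1 | h1
        · tauto
        · tauto
        · have := ihl l' x' hp y h1
          simp [toMultiset] at this
          tauto

theorem pullUpLeft_isHeap' {α : Type*} [LinearOrder α] : ∀ (t t' : BTree α) (x : α),
    t.IsHeap → pullUpLeft t = some (t', x) → t'.IsHeap := by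
  intro t
  induction t with
  | nil => intro t' x _ h; simp [pullUpLeft] at h
  | node v l r ihl ihr =>
    intro t' x hh h
    cases l with
    | nil =>
      simp [pullUpLeft] at h
      rw [← h.1]; trivial
    | node w a b =>
      simp only [pullUpLeft] at h
      cases hp : pullUpLeft (BTree.node w a b) with
      | none => rw [hp] at h; simp at h
      | some p =>
        rw [hp] at h
        obtain ⟨l', x'⟩ := p
        simp at h
        obtain ⟨ht', hx⟩ := h
        obtain ⟨h1, h2, h3, h4⟩ := hh
        rw [← ht']
        refine ⟨h2, ?_, h4, ihl l' x' h3 hp⟩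
        intro y hy
        exact h1 y (pullUpLeft_mem _ _ _ hp y hy)

theorem pullUpLeft_isHeap {α : Type*} [LinearOrder α] (t t' : BTree α) (x : α)
    (hne : t ≠ BTree.nil) (hb : t.IsBraun) (hh : t.IsHeap)
    (h : pullUpLeft t = some (t', x)) :
    t'.IsHeap := by
  exact pullUpLeft_isHeap' t t' x hh h
end

section
/- pullUpLeft extracts exactly one element: if t is a nonempty Braun tree over a linear order α and (t', x) = pullUpLeft t, then the multiset of values of t equals x added to the multiset of values of t'. -/
open BTree

theorem pullUpLeft_toMultiset {α : Type*} [LinearOrder α] (t t' : BTree α) (x : α)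
    (hne : t ≠ BTree.nil) (hb : t.IsBraun)
    (h : pullUpLeft t = some (t', x)) :
    t.toMultiset = x ::ₘ t'.toMultiset := by
  clear hne
  induction t using pullUpLeft.induct generalizing t' x with
  | case1 => simp [pullUpLeft] at h
  | case2 v r =>
    simp [pullUpLeft] at h
    obtain ⟨rfl, rfl⟩ := h
    obtain ⟨hr, -⟩ := hb
    simp [size] at hr
    cases r with
    | nil => simp [toMultiset]
    | node w a b => simp [size] at hr
  | case3 v w a b r l' y hpl ih =>
    simp only [pullUpLeft, hpl] at h
    simp at h
    obtain ⟨rfl, rfl⟩ := h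
    have hm := ih l' y hb.2.2.1 hpl
    simp only [toMultiset, ← Multiset.singleton_add] at hm ⊢
    rw [hm]
    abel
  | case4 v w a b r hpl ih =>
    simp only [pullUpLeft, hpl] at h
    cases h
end

section
/- pushDown restores the heap property: if t = node v l r is a Braun tree over a linear order α and both l and r satisfy the heap property, then pushDown t satisfies the heap property. -/
open BTree


lemma BTree.size_eq_zero {α : Type*} {t : BTree α} (h : t.size = 0) : t = .nil := by
  cases t with
  | nil => rfl
  | node v l r => simp [BTree.size] at h

lemma toMultiset_pushDown {α : Type*} [LinearOrder α] (t : BTree α) :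
    (pushDown t).toMultiset = t.toMultiset := by
  induction t using pushDown.induct with
  | case1 => simp [pushDown]
  | case2 v => simp [pushDown]
  | case3 v w a b h =>
      simp [pushDown, h, toMultiset]
      exact Multiset.cons_swap w v _
  | case4 v w a b h => simp [pushDown, h]
  | case5 v w a b => simp [pushDown]
  | case6 v wl al bl wr ar br h => simp [pushDown, h]
  | case7 v wl al bl wr ar br h h2 ih =>
      simp [pushDown, h, h2, toMultiset, ih]
      rw [Multiset.cons_swap wl wr, Multiset.cons_swap wl v, Multiset.cons_swap wr v]
  | case8 v wl al bl wr ar br h h2 ih =>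
      simp [pushDown, h, h2, toMultiset, ih]
      rw [Multiset.cons_swap wr v]

lemma pushDown_isHeap_aux {α : Type*} [LinearOrder α] (t : BTree α)
    (hb : t.IsBraun) (hl : t.left.IsHeap) (hr : t.right.IsHeap) :
    (pushDown t).IsHeap := by
  induction t using pushDown.induct with
  | case1 => simp [pushDown, IsHeap]
  | case2 v => simp [pushDown, IsHeap, toMultiset]
  | case3 v w a b h =>
      obtain ⟨h1, h2, h3, h4⟩ := hb
      simp [size] at h1 h2
      obtain rfl := BTree.size_eq_zero (by omega : a.size = 0)
      obtain rfl := BTree.size_eq_zero (by omega : b.size = 0)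
      simp [pushDown, h, IsHeap, toMultiset]
      exact h.le
  | case4 v w a b h =>
      simp [left, right] at hl hr
      simp only [pushDown, if_neg h]
      simp only [IsHeap] at hl ⊢
      refine ⟨?_, ?_, hl, trivial⟩
      · intro y hy
        simp only [toMultiset] at hy
        rcases Multiset.mem_cons.mp hy with rfl | hy
        · exact not_lt.mp h
        rcases Multiset.mem_add.mp hy with hy | hy
        exacts [le_trans (not_lt.mp h) (hl.1 y hy), le_trans (not_lt.mp h) (hl.2.1 y hy)]
      · intro y hy
        simp [toMultiset] at hy
  | case5 v w a b =>
      simp [left, right] at hl hr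
      obtain ⟨h1, h2, h3, h4⟩ := hb
      simp [size] at h1
  | case6 v wl al bl wr ar br h =>
      simp [left, right] at hl hr
      simp only [pushDown, if_pos h]
      simp only [IsHeap] at hl hr ⊢
      refine ⟨?_, ?_, hl, hr⟩
      · intro y hy
        simp only [toMultiset] at hy
        rcases Multiset.mem_cons.mp hy with rfl | hy
        · exact h.1
        rcases Multiset.mem_add.mp hy with hy | hy
        exacts [le_trans h.1 (hl.1 y hy), le_trans h.1 (hl.2.1 y hy)]
      · intro y hy
        simp only [toMultiset] at hy
        rcases Multiset.mem_cons.mp hy with rfl | hy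
        · exact h.2
        rcases Multiset.mem_add.mp hy with hy | hy
        exacts [le_trans h.2 (hr.1 y hy), le_trans h.2 (hr.2.1 y hy)]
  | case7 v wl al bl wr ar br h h2 ih =>
      simp [left, right] at hl hr
      obtain ⟨hb1, hb2, hbl, hbr⟩ := hb
      have hwlv : wl < v := by
        rcases not_and_or.mp h with h' | h'
        · exact not_le.mp h'
        · exact lt_of_le_of_lt h2 (not_le.mp h')
      have hbraun : (BTree.node v al bl).IsBraun := by
        obtain ⟨b1, b2, b3, b4⟩ := hbl; exact ⟨b1, b2, b3, b4⟩
      have hheap := ih hbraun (by simpa [left] using hl.2.2.1) (by simpa [right] using hl.2.2.2)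
      simp only [pushDown, h, if_false, h2, if_true]
      refine ⟨?_, ?_, hheap, hr⟩
      · intro y hy
        rw [toMultiset_pushDown] at hy
        simp [toMultiset] at hy
        rcases hy with rfl | hy | hy
        exacts [hwlv.le, hl.1 y hy, hl.2.1 y hy]
      · intro y hy
        simp [toMultiset] at hy
        rcases hy with rfl | hy | hy
        exacts [h2, le_trans h2 (hr.1 y hy), le_trans h2 (hr.2.1 y hy)]
  | case8 v wl al bl wr ar br h h2 ih =>
      simp [left, right] at hl hr
      obtain ⟨hb1, hb2, hbl, hbr⟩ := hb
      have hwr2 : wr ≤ wl := (not_le.mp h2).le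
      have hwrv : wr < v := by
        rcases not_and_or.mp h with h' | h'
        · exact lt_of_le_of_lt hwr2 (not_le.mp h')
        · exact not_le.mp h'
      have hbraun : (BTree.node v ar br).IsBraun := by
        obtain ⟨b1, b2, b3, b4⟩ := hbr; exact ⟨b1, b2, b3, b4⟩
      have hheap := ih hbraun (by simpa [left] using hr.2.2.1) (by simpa [right] using hr.2.2.2)
      simp only [pushDown, h, if_false, h2, if_false]
      refine ⟨?_, ?_, hl, hheap⟩
      · intro y hy
        simp [toMultiset] at hy
        rcases hy with rfl | hy | hy
        exacts [hwr2, le_trans hwr2 (hl.1 y hy), le_trans hwr2 (hl.2.1 y hy)]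
      · intro y hy
        rw [toMultiset_pushDown] at hy
        simp [toMultiset] at hy
        rcases hy with rfl | hy | hy
        exacts [hwrv.le, hr.1 y hy, hr.2.1 y hy]

theorem pushDown_isHeap {α : Type*} [LinearOrder α] (v : α) (l r : BTree α)
    (hb : (BTree.node v l r).IsBraun) (hl : l.IsHeap) (hr : r.IsHeap) :
    (pushDown (BTree.node v l r)).IsHeap :=
  pushDown_isHeap_aux _ hb hl hr
end

section
/- Correctness of removeMin: let t = node v l r be a nonempty Braun tree over a linear order α satisfying the heap property, and let (t'', m) = removeMin t. Then m = v and m ≤ y for every value y occurring in t; t'' is a Braun tree satisfying the heap property; size t'' = size t − 1; and the multiset of values of t'' equals the multiset of values of t with one copy of m erased. -/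
open BTree
namespace BTree

variable {α : Type*}

lemma pull_isSome (v : α) (l r : BTree α) :
    ∃ p, pullUpLeft (BTree.node v l r) = some p := by
  induction l generalizing v r with
  | nil => exact ⟨(.nil, v), rfl⟩
  | node w a b ih =>
      obtain ⟨⟨l', x⟩, hx⟩ := ih w b
      exact ⟨(.node v r l', x), by simp [pullUpLeft, hx]⟩

lemma pull_spec [LinearOrder α] :
    ∀ (t : BTree α), IsBraun t → ∀ t' x, pullUpLeft t = some (t', x) →
      size t = size t' + 1 ∧ toMultiset t = x ::ₘ toMultiset t' ∧ IsBraun t' ∧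
      (IsHeap t → IsHeap t') := by
  intro t
  induction t with
  | nil => intro _ t' x h; simp [pullUpLeft] at h
  | node v l r ihl ihr =>
      intro hb t' x h
      obtain ⟨h1, h2, hbl, hbr⟩ := hb
      cases l with
      | nil =>
          simp [pullUpLeft] at h
          obtain ⟨rfl, rfl⟩ := h
          have hr : size r = 0 := by simpa [size] using h1
          have : r = BTree.nil := by cases r <;> simp_all [size]
          subst this
          simp [size, toMultiset, IsBraun, IsHeap]
      | node w a b =>
          obtain ⟨⟨l', y⟩, hy⟩ := pull_isSome w a b
          simp only [pullUpLeft, hy] at h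
          injection h with h
          injection h with hA hB
          subst hA; subst hB
          obtain ⟨hs, hm, hbl', hhl'⟩ := ihl hbl l' y hy
          have hlpos : 1 ≤ size (BTree.node w a b) := by simp [size]
          refine ⟨?_, ?_, ?_, ?_⟩
          · simp [size] at hs ⊢; omega
          · simp only [toMultiset] at hm ⊢
            rw [hm]
            simp only [← Multiset.singleton_add]
            abel
          · refine ⟨?_, ?_, hbr, hbl'⟩ <;> simp [size] at hs h1 h2 ⊢ <;> omega
          · rintro ⟨hvl, hvr, hhl, hhr⟩
            refine ⟨hvr, ?_, hhr, hhl' hhl⟩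
            intro z hz
            exact hvl z (by rw [hm]; exact Multiset.mem_cons_of_mem hz)

lemma pushDown_size [LinearOrder α] (t : BTree α) : size (pushDown t) = size t := by
  induction t using pushDown.induct with
  | case1 => simp [pushDown]
  | case2 v => simp [pushDown]
  | case3 v w a b h => simp [pushDown, h, size]; try omega
  | case4 v w a b h => simp [pushDown, h]
  | case5 v w a b => simp [pushDown]
  | case6 v wl al bl wr ar br h => simp [pushDown, h]
  | case7 v wl al bl wr ar br h1 h2 ih =>
      simp [pushDown, h1, h2, size, ih]; try omega
  | case8 v wl al bl wr ar br h1 h2 ih =>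
      simp [pushDown, h1, h2, size, ih]; try omega

lemma pushDown_toMultiset [LinearOrder α] (t : BTree α) :
    toMultiset (pushDown t) = toMultiset t := by
  induction t using pushDown.induct with
  | case1 => simp [pushDown]
  | case2 v => simp [pushDown]
  | case3 v w a b h =>
      simp only [pushDown, if_pos h, toMultiset, ← Multiset.singleton_add]; abel
  | case4 v w a b h => simp [pushDown, h]
  | case5 v w a b => simp [pushDown]
  | case6 v wl al bl wr ar br h => simp [pushDown, h]
  | case7 v wl al bl wr ar br h1 h2 ih =>
      simp only [pushDown, if_neg h1, if_pos h2, toMultiset, ih,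
        ← Multiset.singleton_add]
      abel
  | case8 v wl al bl wr ar br h1 h2 ih =>
      simp only [pushDown, if_neg h1, if_neg h2, toMultiset, ih,
        ← Multiset.singleton_add]
      abel

lemma pushDown_braun [LinearOrder α] (t : BTree α) (hb : IsBraun t) :
    IsBraun (pushDown t) := by
  induction t using pushDown.induct with
  | case1 => simpa [pushDown] using hb
  | case2 v => simpa [pushDown] using hb
  | case3 v w a b h =>
      simp only [pushDown, if_pos h]
      simp_all [IsBraun, size]
  | case4 v w a b h => simpa [pushDown, h] using hb
  | case5 v w a b => simpa [pushDown] using hb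
  | case6 v wl al bl wr ar br h => simpa [pushDown, h] using hb
  | case7 v wl al bl wr ar br h1 h2 ih =>
      obtain ⟨ha, hc, ⟨hd, he, hbal, hbbl⟩, hbr⟩ := hb
      simp only [pushDown, if_neg h1, if_pos h2]
      have := pushDown_size (BTree.node v al bl)
      refine ⟨?_, ?_, ih ⟨hd, he, hbal, hbbl⟩, hbr⟩ <;>
        simp [size] at this ha hc ⊢ <;> omega
  | case8 v wl al bl wr ar br h1 h2 ih =>
      obtain ⟨ha, hc, hbl, ⟨hd, he, hbar, hbbr⟩⟩ := hb
      simp only [pushDown, if_neg h1, if_neg h2]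
      have := pushDown_size (BTree.node v ar br)
      refine ⟨?_, ?_, hbl, ih ⟨hd, he, hbar, hbbr⟩⟩ <;>
        simp [size] at this ha hc ⊢ <;> omega

lemma pushDown_heap [LinearOrder α] (t : BTree α) :
    IsBraun t → IsHeap t.left → IsHeap t.right → IsHeap (pushDown t) := by
  induction t using pushDown.induct with
  | case1 => intro _ _ _; simp [pushDown, IsHeap]
  | case2 v => intro _ _ _; simp [pushDown, IsHeap, toMultiset]
  | case3 v w a b h =>
      rintro ⟨h1, h2, hbl, hbr⟩ hl hr
      have hab : a = BTree.nil ∧ b = BTree.nil := by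
        simp [size] at h2; cases a <;> cases b <;> simp_all [size]
      obtain ⟨rfl, rfl⟩ := hab
      simp only [pushDown, if_pos h]
      exact ⟨by simp [toMultiset]; exact le_of_lt h, by simp [toMultiset],
        ⟨by simp [toMultiset], by simp [toMultiset], trivial, trivial⟩, trivial⟩
  | case4 v w a b h =>
      rintro ⟨h1, h2, hbl, hbr⟩ hl hr
      simp only [pushDown, if_neg h]
      simp only [left] at hl
      exact ⟨by
        intro z hz
        simp only [toMultiset, Multiset.mem_cons, Multiset.mem_add] at hz
        rcases hz with rfl | hz | hz
        · exact le_of_not_gt h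
        · exact le_trans (le_of_not_gt h) (hl.1 z hz)
        · exact le_trans (le_of_not_gt h) (hl.2.1 z hz),
        by simp [toMultiset], hl, trivial⟩
  | case5 v w a b =>
      rintro ⟨h1, h2, hbl, hbr⟩ hl hr
      simp [size] at h1
  | case6 v wl al bl wr ar br h =>
      rintro ⟨h1, h2, hbl, hbr⟩ hl hr
      simp only [left] at hl; simp only [right] at hr
      simp only [pushDown, if_pos h]
      refine ⟨?_, ?_, hl, hr⟩
      · intro z hz
        simp only [toMultiset, Multiset.mem_cons, Multiset.mem_add] at hz
        rcases hz with rfl | hz | hz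
        exacts [h.1, le_trans h.1 (hl.1 z hz), le_trans h.1 (hl.2.1 z hz)]
      · intro z hz
        simp only [toMultiset, Multiset.mem_cons, Multiset.mem_add] at hz
        rcases hz with rfl | hz | hz
        exacts [h.2, le_trans h.2 (hr.1 z hz), le_trans h.2 (hr.2.1 z hz)]
  | case7 v wl al bl wr ar br h1 h2 ih =>
      rintro ⟨ha, hc, hbl, hbr⟩ hl hr
      simp only [left] at hl; simp only [right] at hr
      obtain ⟨hwl1, hwl2, hhal, hhbl⟩ := hl
      obtain ⟨hwr1, hwr2, hhar, hhbr⟩ := hr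
      have hwlv : wl ≤ v := by
        rcases not_and_or.mp h1 with h | h
        · exact le_of_lt (lt_of_not_ge h)
        · exact le_trans h2 (le_of_lt (lt_of_not_ge h))
      obtain ⟨hd, he, hbal, hbbl⟩ := hbl
      have hih : IsHeap (pushDown (BTree.node v al bl)) :=
        ih ⟨hd, he, hbal, hbbl⟩ hhal hhbl
      simp only [pushDown, if_neg h1, if_pos h2]
      refine ⟨?_, ?_, hih, ⟨hwr1, hwr2, hhar, hhbr⟩⟩
      · intro z hz
        rw [pushDown_toMultiset] at hz
        simp only [toMultiset, Multiset.mem_cons, Multiset.mem_add] at hz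
        rcases hz with rfl | hz | hz
        exacts [hwlv, hwl1 z hz, hwl2 z hz]
      · intro z hz
        simp only [toMultiset, Multiset.mem_cons, Multiset.mem_add] at hz
        rcases hz with rfl | hz | hz
        exacts [h2, le_trans h2 (hwr1 z hz), le_trans h2 (hwr2 z hz)]
  | case8 v wl al bl wr ar br h1 h2 ih =>
      rintro ⟨ha, hc, hbl, hbr⟩ hl hr
      simp only [left] at hl; simp only [right] at hr
      obtain ⟨hwl1, hwl2, hhal, hhbl⟩ := hl
      obtain ⟨hwr1, hwr2, hhar, hhbr⟩ := hr
      have hwrl : wr ≤ wl := le_of_not_ge h2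
      have hwrv : wr ≤ v := by
        rcases not_and_or.mp h1 with h | h
        · exact le_trans hwrl (le_of_lt (lt_of_not_ge h))
        · exact le_of_lt (lt_of_not_ge h)
      obtain ⟨hd, he, hbar, hbbr⟩ := hbr
      have hih : IsHeap (pushDown (BTree.node v ar br)) :=
        ih ⟨hd, he, hbar, hbbr⟩ hhar hhbr
      simp only [pushDown, if_neg h1, if_neg h2]
      refine ⟨?_, ?_, ⟨hwl1, hwl2, hhal, hhbl⟩, hih⟩
      · intro z hz
        simp only [toMultiset, Multiset.mem_cons, Multiset.mem_add] at hz
        rcases hz with rfl | hz | hz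
        exacts [hwrl, le_trans hwrl (hwl1 z hz), le_trans hwrl (hwl2 z hz)]
      · intro z hz
        rw [pushDown_toMultiset] at hz
        simp only [toMultiset, Multiset.mem_cons, Multiset.mem_add] at hz
        rcases hz with rfl | hz | hz
        exacts [hwrv, hwr1 z hz, hwr2 z hz]

end BTree

theorem removeMin_correct {α : Type*} [LinearOrder α] (v : α) (l r : BTree α)
    (t'' : BTree α) (m : α)
    (hb : (BTree.node v l r).IsBraun) (hh : (BTree.node v l r).IsHeap)
    (h : removeMin (BTree.node v l r) = some (t'', m)) :
    m = v ∧
    (∀ y ∈ (BTree.node v l r).toMultiset, m ≤ y) ∧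
    t''.IsBraun ∧ t''.IsHeap ∧
    t''.size = (BTree.node v l r).size - 1 ∧
    t''.toMultiset = (BTree.node v l r).toMultiset.erase m := by
  obtain ⟨h1, h2, hbl, hbr⟩ := hb
  obtain ⟨hvl, hvr, hhl, hhr⟩ := hh
  cases l with
  | nil =>
      have hr : r = BTree.nil := by
        cases r
        · rfl
        · simp [size] at h1
      subst hr
      simp only [removeMin, pullUpLeft] at h
      injection h with h
      injection h with hA hB
      subst hA; subst hB
      refine ⟨rfl, ?_, trivial, trivial, by simp [size], by simp [toMultiset]⟩
      intro y hy
      simp [toMultiset] at hy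
      subst hy; exact le_refl _
  | node w a b =>
      obtain ⟨⟨l'', x⟩, hx⟩ := pull_isSome w a b
      simp only [removeMin, pullUpLeft, hx] at h
      injection h with h
      injection h with hA hB
      subst hA; subst hB
      obtain ⟨hs, hm, hbl', hhl'⟩ := pull_spec _ hbl l'' x hx
      have hbnew : IsBraun (BTree.node x r l'') := by
        refine ⟨?_, ?_, hbr, hbl'⟩ <;> simp [size] at hs h1 h2 ⊢ <;> omega
      refine ⟨rfl, ?_, pushDown_braun _ hbnew, ?_, ?_, ?_⟩
      · intro y hy
        rcases Multiset.mem_cons.mp hy with rfl | hy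
        · exact le_rfl
        · rcases Multiset.mem_add.mp hy with hy | hy
          exacts [hvl y hy, hvr y hy]
      · exact pushDown_heap _ hbnew hhr (hhl' hhl)
      · rw [pushDown_size]
        simp [size] at hs ⊢; omega
      · rw [pushDown_toMultiset]
        simp only [toMultiset] at hm ⊢
        rw [Multiset.erase_cons_head, hm]
        simp only [← Multiset.singleton_add]
        abel
end

section
/- The depth of a Braun tree grows logarithmically in its size: if t is a Braun tree over a linear order α with size t = n and n ≥ 1, then height t = Nat.log 2 n + 1 (i.e., the height equals ⌊log₂ n⌋ + 1). -/
open BTree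

lemma BTree.size_eq_zero_iff {α : Type*} (t : BTree α) : t.size = 0 ↔ t = .nil := by
  cases t <;> simp [BTree.size]

lemma log2_half (n : ℕ) (h : 2 ≤ n) : Nat.log 2 n = Nat.log 2 (n / 2) + 1 := by
  have h1 := Nat.log_div_base 2 n
  have h2 : 1 ≤ Nat.log 2 n := Nat.log_pos (by norm_num) h
  omega

theorem braun_height_eq_log {α : Type*} [LinearOrder α] (t : BTree α) (n : ℕ)
    (hb : t.IsBraun) (hs : t.size = n) (hn : 1 ≤ n) :
    t.height = Nat.log 2 n + 1 := by
  induction t generalizing n with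
  | nil => simp [BTree.size] at hs; omega
  | node v l r ihl ihr =>
    obtain ⟨h1, h2, hbl, hbr⟩ := hb
    simp only [BTree.size] at hs
    by_cases hl : l.size = 0
    · have hr : r.size = 0 := by omega
      have hn1 : n = 1 := by omega
      have hlnil : l = .nil := (BTree.size_eq_zero_iff l).mp hl
      have hrnil : r = .nil := (BTree.size_eq_zero_iff r).mp hr
      subst hlnil hrnil hn1
      simp [BTree.height, Nat.log_one_right]
    · have hl1 : 1 ≤ l.size := by omega
      have hL := ihl l.size hbl rfl hl1
      have hmax : max l.height r.height = Nat.log 2 l.size + 1 := by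
        by_cases hr : r.size = 0
        · have hrnil : r = .nil := (BTree.size_eq_zero_iff r).mp hr
          subst hrnil
          simp [BTree.height, hL]
        · have hR := ihr r.size hbr rfl (by omega)
          have : Nat.log 2 r.size ≤ Nat.log 2 l.size :=
            Nat.log_mono_right h1
          omega
      have hn2 : 2 ≤ n := by omega
      have hdiv : n / 2 = l.size := by omega
      rw [BTree.height, hmax, log2_half n hn2, hdiv]
      omega
end
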